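/- arXiv:0906.5185 — 4 statements merged into one kernel-verified Lean document; each statement's English description precedes it below -/
import Mathlib

section
/- The restriction of α to the center Z(A) is an injective homomorphism of C-algebras into A₊^op ⊗_C A₋; in particular, the image α(Z(A)) is a commutative subalgebra of A₊^op ⊗_C A₋ isomorphic to Z(A). -/
open scoped TensorProduct

noncomputable section

/-!
For central `z`, the element `α z` acts on `A₊ᵒᵖ ⊗ A₋` by left multiplication compatibly with
left multiplication by `z` on `A`: `μ (α z * t) = z * μ t`. Checking this on a pure tensor
`x ⊗ y` amounts to moving `z` past `x`, which is exactly where centrality enters. Since `μ` is a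
bijection with inverse `α`, this makes `α` multiplicative on the center, and injectivity and
commutativity of the image follow.
-/

namespace Subalgebra

variable {R A : Type*} [CommSemiring R] [Semiring A] [Algebra R A] {Ap Am : Subalgebra R A}
  {μ : (↥Ap)ᵐᵒᵖ ⊗[R] ↥Am →ₗ[R] A}

theorem map_one_of_map_tmul (hμ : ∀ (x : (↥Ap)ᵐᵒᵖ) (y : ↥Am), μ (x ⊗ₜ y) = x.unop * y) :
    μ 1 = 1 := by
  rw [Algebra.TensorProduct.one_def, hμ]
  simp

theorem map_mul_tmul_of_map_tmul
    (hμ : ∀ (x : (↥Ap)ᵐᵒᵖ) (y : ↥Am), μ (x ⊗ₜ y) = x.unop * y)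
    (s : (↥Ap)ᵐᵒᵖ ⊗[R] ↥Am) (x : (↥Ap)ᵐᵒᵖ) (y : ↥Am) :
    μ (s * x ⊗ₜ y) = x.unop * μ s * y := by
  induction s using TensorProduct.induction_on with
  | zero => simp
  | tmul p m =>
    rw [Algebra.TensorProduct.tmul_mul_tmul, hμ, hμ]
    simp only [MulOpposite.unop_mul, MulMemClass.coe_mul, mul_assoc]
  | add s t hs ht => rw [add_mul, map_add, map_add, hs, ht, mul_add, add_mul]

theorem map_mul_of_map_mem_center
    (hμ : ∀ (x : (↥Ap)ᵐᵒᵖ) (y : ↥Am), μ (x ⊗ₜ y) = x.unop * y)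
    {s : (↥Ap)ᵐᵒᵖ ⊗[R] ↥Am} (hs : μ s ∈ Set.center A) (t : (↥Ap)ᵐᵒᵖ ⊗[R] ↥Am) :
    μ (s * t) = μ s * μ t := by
  induction t using TensorProduct.induction_on with
  | zero => simp
  | tmul x y =>
    rw [map_mul_tmul_of_map_tmul hμ, hμ, ← (Set.mem_center_iff.mp hs).comm, mul_assoc]
  | add t t' ht ht' => rw [mul_add, map_add, ht, ht', map_add, mul_add]

end Subalgebra

open Subalgebra in
/-- Let `A` be a unital associative `ℂ`-algebra, `A₊, A₋` unital subalgebras such that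
the multiplication map `μ : A₊ᵒᵖ ⊗[ℂ] A₋ → A` is bijective, and let `α` be the
inverse of `μ`.  Then the restriction of `α` to the center of `A` is an injective
`ℂ`-algebra homomorphism into `A₊ᵒᵖ ⊗[ℂ] A₋`, and its image is commutative. -/
theorem stmt3 (A : Type*) [Ring A] [Algebra ℂ A] (Ap Am : Subalgebra ℂ A)
    (μ : ((↥Ap)ᵐᵒᵖ ⊗[ℂ] ↥Am) →ₗ[ℂ] A)
    (hμ : ∀ (x : (↥Ap)ᵐᵒᵖ) (y : ↥Am), μ (x ⊗ₜ[ℂ] y) = (x.unop : A) * (y : A))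
    (hbij : Function.Bijective μ)
    (α : A →ₗ[ℂ] ((↥Ap)ᵐᵒᵖ ⊗[ℂ] ↥Am))
    (hα : ∀ t, α (μ t) = t) :
    α 1 = 1 ∧
    (∀ x y, x ∈ Set.center A → y ∈ Set.center A → α (x * y) = α x * α y) ∧
    Set.InjOn α (Set.center A) ∧
    (∀ x y, x ∈ Set.center A → y ∈ Set.center A → α x * α y = α y * α x) := by
  have hμα : Function.LeftInverse μ α :=
    Function.LeftInverse.rightInverse_of_surjective hα hbij.2
  have hmul : ∀ x y, x ∈ Set.center A → y ∈ Set.center A → α (x * y) = α x * α y := by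
    intro x y hx _
    have hx' : μ (α x) ∈ Set.center A := by rwa [hμα]
    rw [← hα (α x * α y), map_mul_of_map_mem_center hμ hx', hμα, hμα]
  refine ⟨?_, hmul, hμα.injective.injOn, ?_⟩
  · rw [← map_one_of_map_tmul hμ, hα]
  · intro x y hx hy
    rw [← hmul x y hx hy, ← hmul y x hy hx, (Set.mem_center_iff.mp hx).comm y]
end
end

section
/- The operators K_1,…,K_N pairwise commute: K_i ∘ K_j = K_j ∘ K_i for all i, j. -/
/-!
Write `K_i = z_i + ∑_{k ≠ i} T_ik` with `T_ik = s^z_ik ∘ ∂_ik`. Moving `z_j` through `T_ik`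
turns it into `z_{s_ik(j)}`, so the terms of `[K_i, K_j]` linear in the `T`'s add up to
`(z_i - z_j) (T_ij + T_ji) = 0`. In `∑_{k,l} [T_ik, T_jl]` the terms with disjoint pairs vanish,
the term `(k, l) = (j, i)` vanishes because `T_ji = -T_ij`, and the rest group, for each
`m ∉ {i, j}`, into `[T_ij, T_jm] + [T_im, T_ji] + [T_im, T_jm]`. This vanishes by the relation
`∂_ij ∂_jm = ∂_im ∂_ij + ∂_jm ∂_im` between divided differences (checked after clearing
the three denominators) and the relations `s_ab s_cd = s_{s_ab(c) s_ab(d)} s_ab` between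
transpositions.
-/

open MvPolynomial

noncomputable section

abbrev Rzl (N : ℕ) := MvPolynomial (Fin N ⊕ Fin N) ℂ

/-- The automorphism `s_ij^z` exchanging `z_i ↔ z_j` only. -/
def sZ (N : ℕ) (i j : Fin N) : Rzl N ≃ₐ[ℂ] Rzl N :=
  renameEquiv ℂ (Equiv.sumCongr (Equiv.swap i j) (Equiv.refl (Fin N)))

/-- The automorphism `s_ij^λ` exchanging `λ_i ↔ λ_j` only. -/
def sL (N : ℕ) (i j : Fin N) : Rzl N ≃ₐ[ℂ] Rzl N :=
  renameEquiv ℂ (Equiv.sumCongr (Equiv.refl (Fin N)) (Equiv.swap i j))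

open Equiv Finset Sum

theorem MvPolynomial.rename_swap_rename_swap {σ R : Type*} [CommSemiring R] [DecidableEq σ]
    (a b c d : σ) (p : MvPolynomial σ R) :
    rename (swap a b) (rename (swap c d) p) =
      rename (swap (swap a b c) (swap a b d)) (rename (swap a b) p) := by
  simp only [rename_rename, swap_apply_apply]
  congr 1
  ext x
  simp

section Swaps

variable {N : ℕ}

theorem sZ_apply (a b : Fin N) (p : Rzl N) : sZ N a b p = rename (swap (inl a) (inl b)) p := by
  simp [sZ, Perm.sumCongr_swap_refl]

theorem sL_apply (a b : Fin N) (p : Rzl N) : sL N a b p = rename (swap (inr a) (inr b)) p := by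
  simp [sL, Perm.sumCongr_refl_swap]

theorem sZ_comm (a b : Fin N) : sZ N a b = sZ N b a := by
  rw [sZ, sZ, swap_comm]

theorem sL_comm (a b : Fin N) : sL N a b = sL N b a := by
  rw [sL, sL, swap_comm]

theorem sZ_X_inl (a b c : Fin N) : sZ N a b (X (inl c)) = X (inl (swap a b c)) := by
  rw [sZ_apply, rename_X, inl_injective.swap_apply]

theorem sZ_X_inr (a b c : Fin N) : sZ N a b (X (inr c)) = X (inr c) := by
  rw [sZ_apply, rename_X, swap_apply_of_ne_of_ne] <;> simp

theorem sL_X_inl (a b c : Fin N) : sL N a b (X (inl c)) = X (inl c) := by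
  rw [sL_apply, rename_X, swap_apply_of_ne_of_ne] <;> simp

theorem sL_X_inr (a b c : Fin N) : sL N a b (X (inr c)) = X (inr (swap a b c)) := by
  rw [sL_apply, rename_X, inr_injective.swap_apply]

theorem sZ_sZ (a b c d : Fin N) (p : Rzl N) :
    sZ N a b (sZ N c d p) = sZ N (swap a b c) (swap a b d) (sZ N a b p) := by
  simp only [sZ_apply, rename_swap_rename_swap (inl a), inl_injective.swap_apply]

theorem sL_sL (a b c d : Fin N) (p : Rzl N) :
    sL N a b (sL N c d p) = sL N (swap a b c) (swap a b d) (sL N a b p) := by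
  simp only [sL_apply, rename_swap_rename_swap (inr a), inr_injective.swap_apply]

theorem sZ_sL (a b c d : Fin N) (p : Rzl N) : sZ N a b (sL N c d p) = sL N c d (sZ N a b p) := by
  rw [sZ_apply, sL_apply, rename_swap_rename_swap, swap_apply_of_ne_of_ne, swap_apply_of_ne_of_ne]
    <;> simp [sZ_apply, sL_apply]

end Swaps

theorem sum_erase_sum_erase_eq_zero {α M : Type*} [Fintype α] [DecidableEq α] [AddCommMonoid M]
    {i j : α} (hij : i ≠ j) {f : α → α → M} (hji : f j i = 0)
    (htriple : ∀ m, m ≠ i → m ≠ j → f j m + f m i + f m m = 0)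
    (hdisj : ∀ k l, k ≠ i → k ≠ j → l ≠ i → l ≠ j → l ≠ k → f k l = 0) :
    ∑ k ∈ univ.erase i, ∑ l ∈ univ.erase j, f k l = 0 := by
  have hj : j ∈ univ.erase i := mem_erase.2 ⟨hij.symm, mem_univ j⟩
  have hi : i ∈ univ.erase j := mem_erase.2 ⟨hij, mem_univ i⟩
  have hrow : ∀ m ∈ (univ.erase i).erase j, ∑ l ∈ univ.erase j, f m l = f m i + f m m := by
    intro m hm
    simp only [mem_erase, mem_univ, and_true] at hm
    refine sum_eq_add_of_mem i m hi (mem_erase.2 ⟨hm.1, mem_univ m⟩) (Ne.symm hm.2) ?_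
    exact fun l hl hne => hdisj m l hm.2 hm.1 hne.1 (mem_erase.1 hl).1 hne.2
  rw [← add_sum_erase _ _ hj, ← add_sum_erase _ _ hi, erase_right_comm (a := j) (b := i),
    sum_congr rfl hrow, hji, zero_add, ← sum_add_distrib]
  refine sum_eq_zero fun m hm => ?_
  simp only [mem_erase, mem_univ, and_true] at hm
  rw [← add_assoc]
  exact htriple m hm.2 hm.1

def IsDivDiff {N : ℕ} (D : Fin N → Fin N → Rzl N → Rzl N) : Prop :=
  ∀ i j : Fin N, i ≠ j → ∀ p : Rzl N, (X (inr i) - X (inr j)) * D i j p = p - sL N i j p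

theorem X_inr_sub_X_inr_ne_zero {N : ℕ} {i j : Fin N} (h : i ≠ j) :
    (X (inr i) - X (inr j) : Rzl N) ≠ 0 :=
  sub_ne_zero.2 fun he => h (inr_injective (X_injective he))

def swapDiff {N : ℕ} (D : Fin N → Fin N → Rzl N → Rzl N) (i k : Fin N) (p : Rzl N) :
    Rzl N :=
  sZ N i k (D i k p)

def dunklOp {N : ℕ} (D : Fin N → Fin N → Rzl N → Rzl N) (i : Fin N) (p : Rzl N) : Rzl N :=
  X (inl i) * p + ∑ k ∈ univ.erase i, swapDiff D i k p

namespace IsDivDiff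

variable {N : ℕ} {D : Fin N → Fin N → Rzl N → Rzl N} (hD : IsDivDiff D) {i j : Fin N}
include hD

theorem eq_of_mul_eq (h : i ≠ j) {p q : Rzl N}
    (hq : (X (inr i) - X (inr j)) * q = p - sL N i j p) : D i j p = q :=
  mul_left_cancel₀ (X_inr_sub_X_inr_ne_zero h) ((hD i j h p).trans hq.symm)

theorem map_add (h : i ≠ j) (p q : Rzl N) : D i j (p + q) = D i j p + D i j q :=
  hD.eq_of_mul_eq h <| by rw [mul_add, hD i j h, hD i j h, _root_.map_add]; ring

theorem map_neg (h : i ≠ j) (p : Rzl N) : D i j (-p) = -D i j p :=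
  hD.eq_of_mul_eq h <| by rw [mul_neg, hD i j h, _root_.map_neg]; ring

theorem map_sub (h : i ≠ j) (p q : Rzl N) : D i j (p - q) = D i j p - D i j q := by
  rw [sub_eq_add_neg, hD.map_add h, hD.map_neg h, sub_eq_add_neg]

theorem map_sum (h : i ≠ j) {ι : Type*} (s : Finset ι) (f : ι → Rzl N) :
    D i j (∑ x ∈ s, f x) = ∑ x ∈ s, D i j (f x) :=
  hD.eq_of_mul_eq h <| by simp only [mul_sum, hD i j h, _root_.map_sum, sum_sub_distrib]

theorem map_mul_of_sL_eq (h : i ≠ j) {r : Rzl N} (hr : sL N i j r = r) (p : Rzl N) :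
    D i j (r * p) = r * D i j p :=
  hD.eq_of_mul_eq h <| by rw [mul_left_comm, hD i j h, _root_.map_mul, hr]; ring

theorem antisymm (h : i ≠ j) (p : Rzl N) : D j i p = -D i j p :=
  hD.eq_of_mul_eq h.symm <| by rw [sL_comm]; linear_combination hD i j h p

theorem apply_sZ (h : i ≠ j) (a b : Fin N) (p : Rzl N) :
    D i j (sZ N a b p) = sZ N a b (D i j p) :=
  hD.eq_of_mul_eq h <| by
    rw [← sZ_X_inr a b i, ← sZ_X_inr a b j, ← _root_.map_sub, ← _root_.map_mul, hD i j h,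
      _root_.map_sub, sZ_sL]

theorem sL_conj (h : i ≠ j) (a b : Fin N) (p : Rzl N) :
    sL N a b (D i j p) = D (swap a b i) (swap a b j) (sL N a b p) :=
  (hD.eq_of_mul_eq ((swap a b).injective.ne h) <| by
    rw [← sL_X_inr, ← sL_X_inr, ← _root_.map_sub, ← _root_.map_mul, hD i j h,
      _root_.map_sub, sL_sL]).symm

theorem comm_of_disjoint {k l : Fin N} (hij : i ≠ j) (hkl : k ≠ l)
    (hik : i ≠ k) (hil : i ≠ l) (hjk : j ≠ k) (hjl : j ≠ l) (p : Rzl N) :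
    D k l (D i j p) = D i j (D k l p) :=
  (hD.eq_of_mul_eq hij <| by
    have hfix : sL N k l (X (inr i) - X (inr j)) = X (inr i) - X (inr j) := by
      rw [_root_.map_sub, sL_X_inr, sL_X_inr, swap_apply_of_ne_of_ne hik hil,
        swap_apply_of_ne_of_ne hjk hjl]
    rw [← hD.map_mul_of_sL_eq hkl hfix, hD i j hij, hD.map_sub hkl, hD.sL_conj hkl,
      swap_apply_of_ne_of_ne hik.symm hjk.symm, swap_apply_of_ne_of_ne hil.symm hjl.symm]).symm

theorem mul_mul_mul_apply_apply {x y u v : Fin N} (hxy : x ≠ y) (huv : u ≠ v) (p : Rzl N) :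
    (X (inr x) - X (inr y)) * ((X (inr u) - X (inr v)) *
        ((X (inr (swap x y u)) - X (inr (swap x y v))) * D x y (D u v p))) =
      (X (inr (swap x y u)) - X (inr (swap x y v))) * (p - sL N u v p) -
        (X (inr u) - X (inr v)) * (sL N x y p - sL N (swap x y u) (swap x y v) (sL N x y p)) := by
  linear_combination (X (inr u) - X (inr v)) * (X (inr (swap x y u)) - X (inr (swap x y v))) *
      (hD x y hxy (D u v p) - hD.sL_conj huv x y p) +
    (X (inr (swap x y u)) - X (inr (swap x y v))) * hD u v huv p -
    (X (inr u) - X (inr v)) * hD _ _ ((swap x y).injective.ne huv) (sL N x y p)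

theorem braid {i j m : Fin N} (hij : i ≠ j) (hjm : j ≠ m) (him : i ≠ m) (p : Rzl N) :
    D i j (D j m p) = D i m (D i j p) + D j m (D i m p) := by
  have eX := hD.mul_mul_mul_apply_apply hij hjm p
  have eY := hD.mul_mul_mul_apply_apply him hij p
  have eZ := hD.mul_mul_mul_apply_apply hjm him p
  have hcycle₁ : sL N i m (sL N i j p) = sL N i j (sL N j m p) := by
    rw [sL_sL i j j m, swap_apply_right, swap_apply_of_ne_of_ne him.symm hjm.symm]
  have hcycle₂ : sL N m j (sL N i m p) = sL N i j (sL N j m p) := by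
    rw [sL_comm m j, sL_sL j m i m, swap_apply_right, swap_apply_of_ne_of_ne hij him]
  simp only [swap_apply_left, swap_apply_right, swap_apply_of_ne_of_ne him.symm hjm.symm,
    swap_apply_of_ne_of_ne hij.symm hjm, swap_apply_of_ne_of_ne hij him, hcycle₁, hcycle₂]
    at eX eY eZ
  refine mul_left_cancel₀ (mul_ne_zero (X_inr_sub_X_inr_ne_zero hij)
    (mul_ne_zero (X_inr_sub_X_inr_ne_zero hjm) (X_inr_sub_X_inr_ne_zero him))) ?_
  linear_combination eX + eY - eZ

theorem swapDiff_add {k : Fin N} (hik : i ≠ k) (p q : Rzl N) :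
    swapDiff D i k (p + q) = swapDiff D i k p + swapDiff D i k q := by
  rw [swapDiff, hD.map_add hik, _root_.map_add, swapDiff, swapDiff]

theorem swapDiff_neg {k : Fin N} (hik : i ≠ k) (p : Rzl N) :
    swapDiff D i k (-p) = -swapDiff D i k p := by
  rw [swapDiff, hD.map_neg hik, _root_.map_neg, swapDiff]

theorem swapDiff_sum {k : Fin N} (hik : i ≠ k) {ι : Type*} (s : Finset ι) (f : ι → Rzl N) :
    swapDiff D i k (∑ x ∈ s, f x) = ∑ x ∈ s, swapDiff D i k (f x) := by
  simp only [swapDiff, hD.map_sum hik, _root_.map_sum]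

theorem swapDiff_X_inl_mul {k : Fin N} (hik : i ≠ k) (j : Fin N) (p : Rzl N) :
    swapDiff D i k (X (inl j) * p) = X (inl (swap i k j)) * swapDiff D i k p := by
  rw [swapDiff, hD.map_mul_of_sL_eq hik (sL_X_inl i k j), _root_.map_mul, sZ_X_inl, swapDiff]

theorem swapDiff_antisymm (hij : i ≠ j) (p : Rzl N) : swapDiff D j i p = -swapDiff D i j p := by
  rw [swapDiff, swapDiff, hD.antisymm hij, _root_.map_neg, sZ_comm]

theorem swapDiff_swapDiff {k l : Fin N} (hik : i ≠ k) (p : Rzl N) :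
    swapDiff D i k (swapDiff D j l p) = sZ N i k (sZ N j l (D i k (D j l p))) := by
  rw [swapDiff, swapDiff, hD.apply_sZ hik]

theorem swapDiff_comm_of_disjoint {k l : Fin N} (hik : i ≠ k) (hjl : j ≠ l)
    (hij : i ≠ j) (hil : i ≠ l) (hkj : k ≠ j) (hkl : k ≠ l) (p : Rzl N) :
    swapDiff D i k (swapDiff D j l p) = swapDiff D j l (swapDiff D i k p) := by
  rw [hD.swapDiff_swapDiff hik, hD.swapDiff_swapDiff hjl,
    hD.comm_of_disjoint hjl hik hij.symm hkj.symm hil.symm hkl.symm, sZ_sZ i k,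
    swap_apply_of_ne_of_ne hij.symm hkj.symm, swap_apply_of_ne_of_ne hil.symm hkl.symm]

theorem swapDiff_triple {m : Fin N} (hij : i ≠ j) (hjm : j ≠ m) (him : i ≠ m) (p : Rzl N) :
    swapDiff D i j (swapDiff D j m p) + swapDiff D i m (swapDiff D j i p) +
        swapDiff D i m (swapDiff D j m p) =
      swapDiff D j m (swapDiff D i j p) + swapDiff D j i (swapDiff D i m p) +
        swapDiff D j m (swapDiff D i m p) := by
  have z₁ : ∀ q, sZ N i m (sZ N i j q) = sZ N i j (sZ N j m q) := fun q => by
    rw [sZ_sZ i j j m, swap_apply_right, swap_apply_of_ne_of_ne him.symm hjm.symm]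
  have z₂ : ∀ q, sZ N j m (sZ N i m q) = sZ N i j (sZ N j m q) := fun q => by
    rw [sZ_sZ j m i m, swap_apply_right, swap_apply_of_ne_of_ne hij him]
  have z₃ : ∀ q, sZ N j m (sZ N i j q) = sZ N i m (sZ N j m q) := fun q => by
    rw [sZ_sZ j m i j, swap_apply_left, swap_apply_of_ne_of_ne hij him]
  have z₄ : ∀ q, sZ N i j (sZ N i m q) = sZ N i m (sZ N j m q) := fun q => by
    rw [sZ_sZ i j i m, swap_apply_left, swap_apply_of_ne_of_ne him.symm hjm.symm, z₃]
  have b₁ := congrArg (fun q => sZ N i j (sZ N j m q)) (hD.braid hij hjm him p)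
  have b₂ := congrArg (fun q => sZ N i m (sZ N j m q)) (hD.braid hij.symm him hjm p)
  simp only [hD.antisymm hij, hD.map_neg hjm, _root_.map_neg, _root_.map_add] at b₁ b₂
  rw [hD.swapDiff_swapDiff hij, hD.swapDiff_swapDiff him, hD.swapDiff_swapDiff him,
    hD.swapDiff_swapDiff hjm, hD.swapDiff_swapDiff hij.symm, hD.swapDiff_swapDiff hjm]
  simp only [hD.antisymm hij, hD.map_neg him, sZ_comm j i, _root_.map_neg, z₁, z₂, z₃, z₄]
  linear_combination b₁ - b₂

theorem sum_swapDiff_X_inl_mul (hij : i ≠ j) (p : Rzl N) :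
    ∑ k ∈ univ.erase i, swapDiff D i k (X (inl j) * p) =
      X (inl j) * ∑ k ∈ univ.erase i, swapDiff D i k p +
        (X (inl i) - X (inl j)) * swapDiff D i j p := by
  have hsplit : ∀ k ∈ univ.erase i, swapDiff D i k (X (inl j) * p) =
      X (inl j) * swapDiff D i k p + (X (inl (swap i k j)) - X (inl j)) * swapDiff D i k p := by
    intro k hk
    rw [hD.swapDiff_X_inl_mul (mem_erase.1 hk).1.symm]
    ring
  rw [sum_congr rfl hsplit, sum_add_distrib, mul_sum]
  congr 1
  rw [sum_eq_single_of_mem j (mem_erase.2 ⟨hij.symm, mem_univ j⟩), swap_apply_right]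
  intro k _ hkj
  rw [swap_apply_of_ne_of_ne hij.symm hkj.symm, sub_self, zero_mul]

theorem dunklOp_dunklOp (hij : i ≠ j) (p : Rzl N) :
    dunklOp D i (dunklOp D j p) =
      X (inl i) * (X (inl j) * p) + X (inl i) * ∑ l ∈ univ.erase j, swapDiff D j l p +
        X (inl j) * ∑ k ∈ univ.erase i, swapDiff D i k p +
        (X (inl i) - X (inl j)) * swapDiff D i j p +
        ∑ k ∈ univ.erase i, ∑ l ∈ univ.erase j, swapDiff D i k (swapDiff D j l p) := by
  have hexpand : ∀ k ∈ univ.erase i, swapDiff D i k (dunklOp D j p) =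
      swapDiff D i k (X (inl j) * p) +
        ∑ l ∈ univ.erase j, swapDiff D i k (swapDiff D j l p) := by
    intro k hk
    have hik := (mem_erase.1 hk).1.symm
    rw [dunklOp, hD.swapDiff_add hik, hD.swapDiff_sum hik]
  rw [dunklOp, sum_congr rfl hexpand, sum_add_distrib, hD.sum_swapDiff_X_inl_mul hij, dunklOp]
  ring

theorem sum_sum_swapDiff_comm (hij : i ≠ j) (p : Rzl N) :
    ∑ k ∈ univ.erase i, ∑ l ∈ univ.erase j, swapDiff D i k (swapDiff D j l p) =
      ∑ k ∈ univ.erase j, ∑ l ∈ univ.erase i, swapDiff D j k (swapDiff D i l p) := by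
  rw [sum_comm (s := univ.erase j), ← sub_eq_zero, ← sum_sub_distrib]
  simp_rw [← sum_sub_distrib]
  refine sum_erase_sum_erase_eq_zero hij ?_ ?_ ?_
  · rw [hD.swapDiff_antisymm hij p, hD.swapDiff_antisymm hij, hD.swapDiff_neg hij, sub_self]
  · intro m hmi hmj
    linear_combination hD.swapDiff_triple hij (Ne.symm hmj) (Ne.symm hmi) p
  · intro k l hki hkj hli hlj hlk
    rw [hD.swapDiff_comm_of_disjoint (Ne.symm hki) (Ne.symm hlj) hij (Ne.symm hli) hkj hlk.symm,
      sub_self]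

theorem dunklOp_comm (i j : Fin N) (p : Rzl N) :
    dunklOp D i (dunklOp D j p) = dunklOp D j (dunklOp D i p) := by
  rcases eq_or_ne i j with rfl | hij
  · rfl
  rw [hD.dunklOp_dunklOp hij, hD.dunklOp_dunklOp hij.symm, hD.swapDiff_antisymm hij,
    hD.sum_sum_swapDiff_comm hij]
  ring

end IsDivDiff

theorem stmt4_general (N : ℕ)
    (D : Fin N → Fin N → Rzl N → Rzl N)
    (hD : ∀ i j : Fin N, i ≠ j → ∀ p : Rzl N,
      (X (Sum.inr i) - X (Sum.inr j)) * D i j p = p - sL N i j p)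
    (K : Fin N → Module.End ℂ (Rzl N))
    (hK : ∀ (i : Fin N) (p : Rzl N),
      K i p = X (Sum.inl i) * p + ∑ j ∈ Finset.univ.erase i, sZ N i j (D i j p)) :
    ∀ i j : Fin N, K i * K j = K j * K i := by
  have hKD : ∀ i p, K i p = dunklOp D i p := hK
  intro i j
  refine LinearMap.ext fun p => ?_
  simp only [Module.End.mul_apply, hKD]
  exact IsDivDiff.dunklOp_comm hD i j p

set_option synthInstance.maxHeartbeats 1000000 in
/-- The Dunkl-type operators `K_i` of the polynomial representation of the rational
Cherednik algebra pairwise commute.  Here `D i j p` is the divided difference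
`(p − s_ij^λ p)/(λ_i − λ_j)` and
`K_i p = z_i p + Σ_{j ≠ i} s_ij^z (D i j p)`. -/
theorem stmt4 (N : ℕ) (hN : 0 < N)
    (D : Fin N → Fin N → Rzl N → Rzl N)
    (hD : ∀ i j : Fin N, i ≠ j → ∀ p : Rzl N,
      (X (Sum.inr i) - X (Sum.inr j)) * D i j p = p - sL N i j p)
    (K : Fin N → Module.End ℂ (Rzl N))
    (hK : ∀ (i : Fin N) (p : Rzl N),
      K i p = X (Sum.inl i) * p + ∑ j ∈ Finset.univ.erase i, sZ N i j (D i j p)) :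
    ∀ i j : Fin N, K i * K j = K j * K i :=
  stmt4_general N D hD K hK
end
end

section
/- For all i ≠ j one has (multiplication by λ_i) ∘ K_j − K_j ∘ (multiplication by λ_i) = s_ij^{zλ}, and for all i one has (multiplication by λ_i) ∘ K_i − K_i ∘ (multiplication by λ_i) = − Σ_{a ≠ i} s_ia^{zλ}; moreover σ̂ ∘ K_i ∘ σ̂^{-1} = K_{σ(i)} for every σ ∈ S_N and every i. (Thus multiplication by λ_i, the operators K_i, and the operators s_ij^{zλ} satisfy the defining relations of the rational Cherednik algebra H_N.) -/
open MvPolynomial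

noncomputable section

def permHat (N : ℕ) (σ : Equiv.Perm (Fin N)) : Rzl N ≃ₐ[ℂ] Rzl N :=
  renameEquiv ℂ (Equiv.sumCongr σ σ)

/-- The automorphism `σ̂` as an endomorphism of `ℂ[z,λ]`. -/
def permOp (N : ℕ) (σ : Equiv.Perm (Fin N)) : Module.End ℂ (Rzl N) :=
  (permHat N σ).toLinearMap

/-- The automorphism `s_ij^{zλ}` exchanging both `z_i ↔ z_j` and `λ_i ↔ λ_j`. -/
def sZL (N : ℕ) (i j : Fin N) : Rzl N ≃ₐ[ℂ] Rzl N :=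
  renameEquiv ℂ (Equiv.sumCongr (Equiv.swap i j) (Equiv.swap i j))

/-- Multiplication by a polynomial, as an endomorphism of `ℂ[z,λ]`. -/
def mulP (N : ℕ) (p : Rzl N) : Module.End ℂ (Rzl N) := LinearMap.mulLeft ℂ p

/-!
For a divided difference `∂ = ∂_ij` the twisted Leibniz rule
`(λ_i - λ_j) (q ∂p - ∂(qp)) = (s^λ_ij q - q) s^λ_ij p` shows that `[λ_c, ∂_ij]` is `0`,
`-s^λ_ij` or `s^λ_ij` according as `c ∉ {i, j}`, `c = i` or `c = j`; in `K` it is followed by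
`s^z_ij`, and `s^z_ij s^λ_ij = s^{zλ}_ij`. Equivariance holds because `σ̂` conjugates `s^z_ij`,
`s^λ_ij`, and hence `∂_ij`, into the same operators at `σ i, σ j`.
-/

lemma MvPolynomial.renameEquiv_apply_renameEquiv_apply {R σ : Type*} [CommSemiring R]
    (e g : Equiv.Perm σ) (p : MvPolynomial σ R) :
    renameEquiv R e (renameEquiv R g p) = renameEquiv R (e * g) p := by
  simp only [renameEquiv_apply, rename_rename, Equiv.Perm.coe_mul]

namespace Cherednik

variable {N : ℕ}

lemma sZ_apply_sL_apply (i j : Fin N) (p : Rzl N) : sZ N i j (sL N i j p) = sZL N i j p := by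
  rw [sZ, sL, sZL, renameEquiv_apply_renameEquiv_apply, Equiv.Perm.sumCongr_mul]
  rfl

lemma sZL_comm (i j : Fin N) : sZL N i j = sZL N j i := by
  rw [sZL, sZL, Equiv.swap_comm]

lemma sL_X_inr (i j k : Fin N) :
    sL N i j (X (Sum.inr k)) = X (Sum.inr (Equiv.swap i j k)) := by
  simp only [sL, renameEquiv_apply, rename_X, Equiv.sumCongr_apply, Sum.map_inr]

lemma sZ_X_inr_mul (i j k : Fin N) (q : Rzl N) :
    sZ N i j (X (Sum.inr k) * q) = X (Sum.inr k) * sZ N i j q := by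
  simp only [map_mul, sZ, renameEquiv_apply, rename_X, Equiv.sumCongr_apply, Sum.map_inr,
    Equiv.refl_apply]

lemma permHat_X (σ : Equiv.Perm (Fin N)) (k : Fin N ⊕ Fin N) :
    permHat N σ (X k) = X (Sum.map σ σ k) := by
  simp [permHat]

lemma permHat_sZ (σ : Equiv.Perm (Fin N)) (i j : Fin N) (p : Rzl N) :
    permHat N σ (sZ N i j p) = sZ N (σ i) (σ j) (permHat N σ p) := by
  simp only [permHat, sZ, renameEquiv_apply_renameEquiv_apply, Equiv.Perm.sumCongr_mul,
    Equiv.mul_swap_eq_swap_mul]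
  rfl

lemma permHat_sL (σ : Equiv.Perm (Fin N)) (i j : Fin N) (p : Rzl N) :
    permHat N σ (sL N i j p) = sL N (σ i) (σ j) (permHat N σ p) := by
  simp only [permHat, sL, renameEquiv_apply_renameEquiv_apply, Equiv.Perm.sumCongr_mul,
    Equiv.mul_swap_eq_swap_mul]
  rfl

lemma X_inr_sub_X_inr_ne_zero {i j : Fin N} (h : i ≠ j) :
    (X (Sum.inr i) - X (Sum.inr j) : Rzl N) ≠ 0 :=
  sub_ne_zero.2 fun e => h (Sum.inr_injective (X_injective e))

def IsDividedDifference (D : Fin N → Fin N → Rzl N → Rzl N) : Prop :=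
  ∀ i j : Fin N, i ≠ j → ∀ p : Rzl N,
    (X (Sum.inr i) - X (Sum.inr j)) * D i j p = p - sL N i j p

section DividedDifference

variable {D : Fin N → Fin N → Rzl N → Rzl N} (hD : IsDividedDifference D)
include hD

lemma IsDividedDifference.mul_sub_mul {i j : Fin N} (hij : i ≠ j) (q p : Rzl N) :
    (X (Sum.inr i) - X (Sum.inr j)) * (q * D i j p - D i j (q * p)) =
      (sL N i j q - q) * sL N i j p := by
  linear_combination q * hD i j hij p - hD i j hij (q * p) + map_mul (sL N i j) q p

lemma IsDividedDifference.X_mul_sub_of_ne {i j c : Fin N} (hij : i ≠ j) (hci : c ≠ i)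
    (hcj : c ≠ j) (p : Rzl N) :
    X (Sum.inr c) * D i j p - D i j (X (Sum.inr c) * p) = 0 := by
  have h := hD.mul_sub_mul hij (X (Sum.inr c)) p
  rw [sL_X_inr, Equiv.swap_apply_of_ne_of_ne hci hcj, sub_self, zero_mul] at h
  exact (mul_eq_zero.1 h).resolve_left (X_inr_sub_X_inr_ne_zero hij)

lemma IsDividedDifference.X_left_mul_sub {i j : Fin N} (hij : i ≠ j) (p : Rzl N) :
    X (Sum.inr i) * D i j p - D i j (X (Sum.inr i) * p) = - sL N i j p := by
  have h := hD.mul_sub_mul hij (X (Sum.inr i)) p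
  rw [sL_X_inr, Equiv.swap_apply_left] at h
  exact mul_left_cancel₀ (X_inr_sub_X_inr_ne_zero hij) (by linear_combination h)

lemma IsDividedDifference.X_right_mul_sub {i j : Fin N} (hij : i ≠ j) (p : Rzl N) :
    X (Sum.inr j) * D i j p - D i j (X (Sum.inr j) * p) = sL N i j p := by
  have h := hD.mul_sub_mul hij (X (Sum.inr j)) p
  rw [sL_X_inr, Equiv.swap_apply_right] at h
  exact mul_left_cancel₀ (X_inr_sub_X_inr_ne_zero hij) h

lemma IsDividedDifference.permHat_apply (σ : Equiv.Perm (Fin N)) {i j : Fin N} (hij : i ≠ j)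
    (p : Rzl N) : permHat N σ (D i j p) = D (σ i) (σ j) (permHat N σ p) := by
  have hσ : σ i ≠ σ j := σ.injective.ne hij
  apply mul_left_cancel₀ (X_inr_sub_X_inr_ne_zero hσ)
  have h := congrArg (permHat N σ) (hD i j hij p)
  rw [map_mul, map_sub, map_sub, permHat_X, permHat_X, permHat_sL] at h
  rw [hD _ _ hσ, ← h]
  rfl

end DividedDifference

section DunklOperator

variable {D : Fin N → Fin N → Rzl N → Rzl N} {K : Fin N → Module.End ℂ (Rzl N)}
  (hK : ∀ (i : Fin N) (p : Rzl N),
    K i p = X (Sum.inl i) * p + ∑ j ∈ Finset.univ.erase i, sZ N i j (D i j p))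
include hK

-- `z_j` and every `s^z_ja` commute with `λ_c`.
lemma X_inr_mul_K_sub_K_mul (c j : Fin N) (p : Rzl N) :
    X (Sum.inr c) * K j p - K j (X (Sum.inr c) * p) =
      ∑ a ∈ Finset.univ.erase j,
        sZ N j a (X (Sum.inr c) * D j a p - D j a (X (Sum.inr c) * p)) := by
  simp only [hK, map_sub, sZ_X_inr_mul, Finset.sum_sub_distrib, ← Finset.mul_sum]
  ring

lemma mulP_X_inr_mul_K_sub_of_ne (hD : IsDividedDifference D) {i j : Fin N} (hij : i ≠ j) :
    mulP N (X (Sum.inr i)) * K j - K j * mulP N (X (Sum.inr i)) =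
      (sZL N i j).toLinearMap := by
  refine LinearMap.ext fun p => ?_
  change X (Sum.inr i) * K j p - K j (X (Sum.inr i) * p) = sZL N i j p
  rw [X_inr_mul_K_sub_K_mul hK, Finset.sum_eq_single_of_mem i (by simpa using hij),
    hD.X_right_mul_sub hij.symm, sZ_apply_sL_apply, sZL_comm]
  intro a ha hai
  rw [hD.X_mul_sub_of_ne (Finset.ne_of_mem_erase ha).symm hij (Ne.symm hai), map_zero]

lemma mulP_X_inr_mul_K_sub_self (hD : IsDividedDifference D) (i : Fin N) :
    mulP N (X (Sum.inr i)) * K i - K i * mulP N (X (Sum.inr i)) =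
      - ∑ a ∈ Finset.univ.erase i, (sZL N i a).toLinearMap := by
  refine LinearMap.ext fun p => ?_
  simp only [LinearMap.sub_apply, LinearMap.neg_apply, LinearMap.coe_sum, Finset.sum_apply,
    Module.End.mul_apply, AlgEquiv.toLinearMap_apply, mulP, LinearMap.mulLeft_apply]
  rw [X_inr_mul_K_sub_K_mul hK, ← Finset.sum_neg_distrib]
  refine Finset.sum_congr rfl fun a ha => ?_
  rw [hD.X_left_mul_sub (Finset.ne_of_mem_erase ha).symm, map_neg, sZ_apply_sL_apply]

lemma permHat_K (hD : IsDividedDifference D) (σ : Equiv.Perm (Fin N)) (i : Fin N)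
    (p : Rzl N) : permHat N σ (K i p) = K (σ i) (permHat N σ p) := by
  rw [hK, hK, map_add, map_mul, permHat_X, map_sum]
  congr 1
  refine Finset.sum_equiv σ (fun j => by simp) fun j hj => ?_
  rw [permHat_sZ, hD.permHat_apply σ (Finset.ne_of_mem_erase hj).symm]

end DunklOperator

end Cherednik

open Cherednik in
theorem stmt5_general (N : ℕ)
    (D : Fin N → Fin N → Rzl N → Rzl N)
    (hD : ∀ i j : Fin N, i ≠ j → ∀ p : Rzl N,
      (X (Sum.inr i) - X (Sum.inr j)) * D i j p = p - sL N i j p)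
    (K : Fin N → Module.End ℂ (Rzl N))
    (hK : ∀ (i : Fin N) (p : Rzl N),
      K i p = X (Sum.inl i) * p + ∑ j ∈ Finset.univ.erase i, sZ N i j (D i j p)) :
    (∀ i j : Fin N, i ≠ j →
      mulP N (X (Sum.inr i)) * K j - K j * mulP N (X (Sum.inr i)) =
        (sZL N i j).toLinearMap) ∧
    (∀ i : Fin N,
      mulP N (X (Sum.inr i)) * K i - K i * mulP N (X (Sum.inr i)) =
        - ∑ a ∈ Finset.univ.erase i, (sZL N i a).toLinearMap) ∧
    (∀ (σ : Equiv.Perm (Fin N)) (i : Fin N),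
      permOp N σ * K i * permOp N σ⁻¹ = K (σ i)) := by
  refine ⟨fun i j hij => mulP_X_inr_mul_K_sub_of_ne hK hD hij,
    mulP_X_inr_mul_K_sub_self hK hD, fun σ i => LinearMap.ext fun p => ?_⟩
  change permHat N σ (K i (permHat N σ⁻¹ p)) = K (σ i) p
  rw [permHat_K hK hD]
  exact congrArg (K (σ i)) ((permHat N σ).apply_symm_apply p)

set_option synthInstance.maxHeartbeats 1000000 in
/-- Multiplication by `λ_i`, the operators `K_i` and the operators `s_ij^{zλ}`
satisfy the defining relations of the rational Cherednik algebra `H_N`. -/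
theorem stmt5 (N : ℕ) (hN : 0 < N)
    (D : Fin N → Fin N → Rzl N → Rzl N)
    (hD : ∀ i j : Fin N, i ≠ j → ∀ p : Rzl N,
      (X (Sum.inr i) - X (Sum.inr j)) * D i j p = p - sL N i j p)
    (K : Fin N → Module.End ℂ (Rzl N))
    (hK : ∀ (i : Fin N) (p : Rzl N),
      K i p = X (Sum.inl i) * p + ∑ j ∈ Finset.univ.erase i, sZ N i j (D i j p)) :
    (∀ i j : Fin N, i ≠ j →
      mulP N (X (Sum.inr i)) * K j - K j * mulP N (X (Sum.inr i)) =
        (sZL N i j).toLinearMap) ∧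
    (∀ i : Fin N,
      mulP N (X (Sum.inr i)) * K i - K i * mulP N (X (Sum.inr i)) =
        - ∑ a ∈ Finset.univ.erase i, (sZL N i a).toLinearMap) ∧
    (∀ (σ : Equiv.Perm (Fin N)) (i : Fin N),
      permOp N σ * K i * permOp N σ⁻¹ = K (σ i)) :=
  stmt5_general N D hD K hK
end
end

section
/- The projection pr : V_1 → C[z,λ], Σ_σ p_σ ε_σ ↦ p_id, restricts to a C-linear isomorphism from V_1^{S^R} onto C[z,λ], and restricts to a C-linear isomorphism from W = V_1^{S^L} ∩ V_1^{S^R} onto P_N. -/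
open MvPolynomial

noncomputable section

/-- The algebra of multi-symmetric polynomials `P_N`. -/
def PN (N : ℕ) : Subalgebra ℂ (Rzl N) :=
  ⨅ σ : Equiv.Perm (Fin N), AlgHom.equalizer (permHat N σ).toAlgHom (AlgHom.id ℂ (Rzl N))

/-- The free `ℂ[z,λ]`-module `V_1` with basis `{ε_τ : τ ∈ S_N}`, realized as
functions `S_N → ℂ[z,λ]`. -/
abbrev V1 (N : ℕ) := Equiv.Perm (Fin N) → Rzl N

/-- The left action generator: `T_ij^L (p ε_τ) = s_ij^λ(p) ε_{s_ij τ}`. -/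
def TL (N : ℕ) (i j : Fin N) : Module.End ℂ (V1 N) :=
  (LinearMap.compLeft (sL N i j).toLinearMap (Equiv.Perm (Fin N))) ∘ₗ
    LinearMap.funLeft ℂ (Rzl N) (fun ρ => Equiv.swap i j * ρ)

/-- The right action generator: `T_ij^R (p ε_τ) = s_ij^z(p) ε_{τ s_ij}`. -/
def TR (N : ℕ) (i j : Fin N) : Module.End ℂ (V1 N) :=
  (LinearMap.compLeft (sZ N i j).toLinearMap (Equiv.Perm (Fin N))) ∘ₗ
    LinearMap.funLeft ℂ (Rzl N) (fun ρ => ρ * Equiv.swap i j)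

/-- The invariants of the left `S_N`-action on `V_1`. -/
def V1SL (N : ℕ) : Set (V1 N) := {F | ∀ i j : Fin N, i < j → TL N i j F = F}

/-- The invariants of the right `S_N`-action on `V_1`. -/
def V1SR (N : ℕ) : Set (V1 N) := {F | ∀ i j : Fin N, i < j → TR N i j F = F}

/-- `W = V_1^{S^L} ∩ V_1^{S^R}`. -/
def WW (N : ℕ) : Set (V1 N) := V1SL N ∩ V1SR N

/-!
Right invariance under the transpositions, which generate `S_N`, forces
`F σ = (σ⁻¹ acting on the z's)(F 1)`, so `F` is determined by `F 1`; conversely this formula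
defines a right-invariant vector for every polynomial. For such an `F`, left invariance under
`s_ij` evaluated at `1` says exactly that `F 1` is fixed by `s_ij^z s_ij^λ`, i.e. `F 1 ∈ P_N`.
-/

section Rename

variable {R α β : Type*} [CommSemiring R]

lemma rename_sumCongr_rename_sumCongr (a c : Equiv.Perm α) (b d : Equiv.Perm β)
    (p : MvPolynomial (α ⊕ β) R) :
    rename (Equiv.sumCongr a b) (rename (Equiv.sumCongr c d) p)
      = rename (Equiv.sumCongr (a * c) (b * d)) p := by
  rw [rename_rename, Equiv.Perm.mul_def, Equiv.Perm.mul_def, ← Equiv.sumCongr_trans,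
    Equiv.coe_trans]

lemma rename_sumCongr_one_one (p : MvPolynomial (α ⊕ β) R) :
    rename (Equiv.sumCongr (1 : Equiv.Perm α) (1 : Equiv.Perm β)) p = p := by
  rw [Equiv.Perm.one_def, Equiv.Perm.one_def, Equiv.sumCongr_refl, Equiv.coe_refl,
    rename_id_apply]

end Rename

section Invariants

variable {N : ℕ}

lemma TR_apply (i j : Fin N) (F : V1 N) (τ : Equiv.Perm (Fin N)) :
    TR N i j F τ = rename (Equiv.sumCongr (Equiv.swap i j) 1) (F (τ * Equiv.swap i j)) :=
  rfl

lemma TL_apply (i j : Fin N) (F : V1 N) (τ : Equiv.Perm (Fin N)) :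
    TL N i j F τ = rename (Equiv.sumCongr 1 (Equiv.swap i j)) (F (Equiv.swap i j * τ)) :=
  rfl

lemma TR_comm (i j : Fin N) : TR N j i = TR N i j := by
  simp only [TR, sZ, Equiv.swap_comm]

lemma TL_comm (i j : Fin N) : TL N j i = TL N i j := by
  simp only [TL, sL, Equiv.swap_comm]

lemma TR_eq_of_mem_V1SR {F : V1 N} (hF : F ∈ V1SR N) {i j : Fin N} (hij : i ≠ j) :
    TR N i j F = F := by
  rcases hij.lt_or_gt with h | h
  · exact hF i j h
  · rw [← TR_comm]; exact hF j i h

lemma TL_eq_of_mem_V1SL {F : V1 N} (hF : F ∈ V1SL N) {i j : Fin N} (hij : i ≠ j) :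
    TL N i j F = F := by
  rcases hij.lt_or_gt with h | h
  · exact hF i j h
  · rw [← TL_comm]; exact hF j i h

lemma mem_PN_iff (p : Rzl N) :
    p ∈ PN N ↔ ∀ σ : Equiv.Perm (Fin N), rename (Equiv.sumCongr σ σ) p = p := by
  simp only [PN, Algebra.mem_iInf, AlgHom.mem_equalizer]
  rfl

lemma mem_PN_of_forall_swap {p : Rzl N}
    (hp : ∀ i j : Fin N, i ≠ j →
      rename (Equiv.sumCongr (Equiv.swap i j) (Equiv.swap i j)) p = p) :
    p ∈ PN N := by
  rw [mem_PN_iff]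
  intro σ
  induction σ using Equiv.Perm.swap_induction_on' with
  | one => exact rename_sumCongr_one_one p
  | mul_swap ρ i j hij ih => rw [← rename_sumCongr_rename_sumCongr, hp i j hij, ih]

lemma apply_eq_of_mem_V1SR {F : V1 N} (hF : F ∈ V1SR N) (σ : Equiv.Perm (Fin N)) :
    F σ = rename (Equiv.sumCongr σ⁻¹ 1) (F 1) := by
  induction σ using Equiv.Perm.swap_induction_on' with
  | one => rw [inv_one, rename_sumCongr_one_one]
  | mul_swap ρ i j hij ih =>
    have hR := congrFun (TR_eq_of_mem_V1SR hF hij) (ρ * Equiv.swap i j)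
    rw [TR_apply, Equiv.mul_swap_mul_self] at hR
    rw [← hR, ih, rename_sumCongr_rename_sumCongr, mul_inv_rev, Equiv.swap_inv, one_mul]

def extendR (p : Rzl N) : V1 N :=
  fun σ => rename (Equiv.sumCongr σ⁻¹ 1) p

lemma extendR_one (p : Rzl N) : extendR p 1 = p := by
  rw [extendR, inv_one, rename_sumCongr_one_one]

lemma extendR_mem_V1SR (p : Rzl N) : extendR p ∈ V1SR N := by
  intro i j _
  funext τ
  rw [TR_apply, extendR, extendR, rename_sumCongr_rename_sumCongr, mul_one, mul_inv_rev,
    Equiv.swap_inv, Equiv.swap_mul_self_mul]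

lemma extendR_mem_V1SL {p : Rzl N} (hp : p ∈ PN N) : extendR p ∈ V1SL N := by
  intro i j _
  funext τ
  have hswap := (mem_PN_iff p).1 hp (Equiv.swap i j)
  calc TL N i j (extendR p) τ
      = rename (Equiv.sumCongr τ⁻¹ 1)
          (rename (Equiv.sumCongr (Equiv.swap i j) (Equiv.swap i j)) p) := by
        rw [TL_apply, extendR, rename_sumCongr_rename_sumCongr, rename_sumCongr_rename_sumCongr,
          mul_inv_rev, Equiv.swap_inv]
        simp only [one_mul, mul_one]
    _ = extendR p τ := by rw [hswap, extendR]

lemma apply_one_mem_PN_of_mem_WW {F : V1 N} (hF : F ∈ WW N) : F 1 ∈ PN N := by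
  refine mem_PN_of_forall_swap fun i j hij => ?_
  have hL := congrFun (TL_eq_of_mem_V1SL hF.1 hij) 1
  rwa [TL_apply, mul_one, apply_eq_of_mem_V1SR hF.2, Equiv.swap_inv,
    rename_sumCongr_rename_sumCongr, one_mul, mul_one] at hL

lemma injOn_V1SR : Set.InjOn (fun F : V1 N => F 1) (V1SR N) := fun F hF G hG h =>
  funext fun σ => by rw [apply_eq_of_mem_V1SR hF, apply_eq_of_mem_V1SR hG]; exact congrArg _ h

lemma image_V1SR : (fun F : V1 N => F 1) '' V1SR N = Set.univ :=
  Set.eq_univ_of_forall fun p => ⟨extendR p, extendR_mem_V1SR p, extendR_one p⟩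

lemma image_WW : (fun F : V1 N => F 1) '' WW N = (PN N : Set (Rzl N)) := by
  ext p
  constructor
  · rintro ⟨F, hF, rfl⟩
    exact apply_one_mem_PN_of_mem_WW hF
  · intro hp
    exact ⟨extendR p, ⟨extendR_mem_V1SL hp, extendR_mem_V1SR p⟩, extendR_one p⟩

end Invariants

set_option synthInstance.maxHeartbeats 1000000 in
theorem stmt10_general (N : ℕ) :
    Set.InjOn (fun F : V1 N => F 1) (V1SR N) ∧
    (fun F : V1 N => F 1) '' (V1SR N) = Set.univ ∧
    Set.InjOn (fun F : V1 N => F 1) (WW N) ∧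
    (fun F : V1 N => F 1) '' (WW N) = (PN N : Set (Rzl N)) :=
  ⟨injOn_V1SR, image_V1SR, injOn_V1SR.mono fun _ hF => hF.2, image_WW⟩

set_option synthInstance.maxHeartbeats 1000000 in
/-- The projection `pr : Σ_σ p_σ ε_σ ↦ p_id` restricts to a linear isomorphism
from `V_1^{S^R}` onto `ℂ[z,λ]`, and from `W` onto `P_N`. -/
theorem stmt10 (N : ℕ) (hN : 0 < N) :
    Set.InjOn (fun F : V1 N => F 1) (V1SR N) ∧
    (fun F : V1 N => F 1) '' (V1SR N) = Set.univ ∧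
    Set.InjOn (fun F : V1 N => F 1) (WW N) ∧
    (fun F : V1 N => F 1) '' (WW N) = (PN N : Set (Rzl N)) :=
  stmt10_general N
end
end
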